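/- Let u_λ minimize D_λ(u) = λ² ∑_{i=1}^n (u(p_i)−q_i)² + λ‖∇^k u‖²_{L²(𝕋^m)} + ‖u‖²_{L²(𝕋^m)} over the space TP_ω of trigonometric polynomials of degree ≤ ω. If every data point p_i lies on the uniform rectangular grid with spacing 1/ω_j in coordinate j, then lim_{λ→∞} u_λ(p_i) = q_i for all i. -/

import Mathlib

open Filter

/-- Fourier multiplier weight of the `k`-gradient seminorm on `𝕋^m`. -/
noncomputable def gradW (m k : ℕ) (l : Fin m → ℤ) : ℝ :=
  ∑ j, (2 * Real.pi * (l j : ℝ)) ^ (2 * k)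

/-- Coefficient sequences of real-valued trigonometric polynomials of degree `≤ ω`:
conjugate-symmetric and supported in the box `−ω ≤ l ≤ ω`. -/
def TPcoef (m : ℕ) (ω : Fin m → ℕ) (d : (Fin m → ℤ) → ℂ) : Prop :=
  (∀ l, d (-l) = (starRingEnd ℂ) (d l)) ∧
  ∀ l : Fin m → ℤ, (¬ ∀ j, |l j| ≤ (ω j : ℤ)) → d l = 0

/-- Pointwise evaluation of the trigonometric polynomial with coefficients `d`. -/
noncomputable def evalF (m : ℕ) (d : (Fin m → ℤ) → ℂ) (x : Fin m → ℝ) : ℝ :=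
  (∑' l : Fin m → ℤ,
    d l * Complex.exp (2 * (Real.pi : ℂ) * Complex.I * ∑ j, (l j : ℂ) * (x j : ℂ))).re

/-- `D_λ(u) = λ² ∑_i (u(p_i) − q_i)² + λ‖∇^k u‖²_{L²(𝕋^m)} + ‖u‖²_{L²(𝕋^m)}`. -/
noncomputable def Dfun (m k nn : ℕ) (lam : ℝ) (p : Fin nn → Fin m → ℝ)
    (q : Fin nn → ℝ) (d : (Fin m → ℤ) → ℂ) : ℝ :=
  lam ^ 2 * ∑ i, (evalF m d (p i) - q i) ^ 2
    + lam * ∑' l : Fin m → ℤ, gradW m k l * ‖d l‖ ^ 2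
    + ∑' l : Fin m → ℤ, ‖d l‖ ^ 2

/-!
Compare the minimizer with `Γ = ∑ᵢ qᵢ D(· - pᵢ)`, where `D` is the modified Dirichlet kernel of
degree `ω`: in coordinate `j` it has weight `1/(2ωⱼ)` at the frequencies `|t| < ωⱼ` and `1/(4ωⱼ)`
at `t = ±ωⱼ`. The halved edge weights keep `D` real while making it, on the grid `ℤ^m / ω`,
the indicator of `0`; so `Γ` is an admissible trigonometric polynomial interpolating the data.
Minimality of `u_λ` gives `λ² (u_λ(pᵢ) - qᵢ)² ≤ D_λ(u_λ) ≤ D_λ(Γ) = λ ‖∇ᵏΓ‖² + ‖Γ‖²`,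
hence `u_λ(pᵢ) - qᵢ = O(λ^(-1/2))`.
-/

open Finset Complex

noncomputable def expTwoPiI (r : ℝ) : ℂ := Complex.exp (2 * Real.pi * I * r)

lemma expTwoPiI_add (r s : ℝ) : expTwoPiI (r + s) = expTwoPiI r * expTwoPiI s := by
  rw [expTwoPiI, expTwoPiI, expTwoPiI, ← Complex.exp_add]
  push_cast
  ring_nf

lemma expTwoPiI_sum {ι : Type*} (s : Finset ι) (f : ι → ℝ) :
    expTwoPiI (∑ j ∈ s, f j) = ∏ j ∈ s, expTwoPiI (f j) := by
  simp only [expTwoPiI, ← Complex.exp_sum, Complex.ofReal_sum, Finset.mul_sum]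

lemma conj_expTwoPiI (r : ℝ) : starRingEnd ℂ (expTwoPiI r) = expTwoPiI (-r) := by
  rw [expTwoPiI, expTwoPiI, ← Complex.exp_conj]
  simp only [map_mul, map_ofNat, Complex.conj_ofReal, Complex.conj_I, Complex.ofReal_neg]
  ring_nf

lemma expTwoPiI_intCast_mul_div (t a : ℤ) (N : ℕ) :
    expTwoPiI (t * (a / N)) = (Complex.exp (2 * Real.pi * I / N) ^ a) ^ t := by
  rw [expTwoPiI, ← zpow_mul, ← Complex.exp_int_mul]
  congr 1
  push_cast
  ring

lemma sum_Ico_zpow_eq_zero {K : Type*} [Field K] {ζ : K} {n : ℕ} (hζn : ζ ^ n = 1)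
    (hζ1 : ζ ≠ 1) (a : ℤ) : ∑ t ∈ Ico a (a + n), ζ ^ t = 0 := by
  rcases eq_or_ne n 0 with rfl | hn
  · simp
  have hζ0 : ζ ≠ 0 := by rintro rfl; simp [hn] at hζn
  rw [Int.Ico_eq_finset_map, Finset.sum_map]
  simp only [add_sub_cancel_left, Int.toNat_natCast, Function.Embedding.trans_apply,
    Nat.castEmbedding_apply, addLeftEmbedding_apply, zpow_add₀ hζ0, zpow_natCast,
    ← Finset.mul_sum, geom_sum_eq hζ1, hζn, sub_self, zero_div, mul_zero]

noncomputable def dirichletWeight (N : ℕ) (t : ℤ) : ℝ :=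
  if |t| < N then (2 * N)⁻¹ else if |t| = N then (4 * N)⁻¹ else 0

lemma dirichletWeight_neg (N : ℕ) (t : ℤ) : dirichletWeight N (-t) = dirichletWeight N t := by
  simp only [dirichletWeight, abs_neg]

lemma dirichletWeight_eq_zero {N : ℕ} {t : ℤ} (ht : (N : ℤ) < |t|) : dirichletWeight N t = 0 := by
  rw [dirichletWeight, if_neg ht.not_gt, if_neg ht.ne']

lemma sum_dirichletWeight_mul_zpow {N : ℕ} (hN : N ≠ 0) {ζ : ℂ} (hζ : ζ ^ N = 1) :
    ∑ t ∈ Icc (-N : ℤ) N, (dirichletWeight N t : ℂ) * ζ ^ t = if ζ = 1 then 1 else 0 := by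
  have hN' : (N : ℂ) ≠ 0 := by exact_mod_cast hN
  have hζN : ζ ^ (N : ℤ) = 1 := by rw [zpow_natCast, hζ]
  have hζnegN : ζ ^ (-N : ℤ) = 1 := by rw [zpow_neg, hζN, inv_one]
  -- since `ζ ^ N = ζ ^ (-N) = 1`, the two edge weights `1/(4N)` merge into one interior weight
  have half : ∑ t ∈ Icc (-N : ℤ) N, (dirichletWeight N t : ℂ) * ζ ^ t
      = (2 * N : ℂ)⁻¹ * ∑ t ∈ Ico (-N : ℤ) N, ζ ^ t := by
    have interior : ∀ t ∈ Ioo (-N : ℤ) N, dirichletWeight N t = (2 * N : ℝ)⁻¹ := fun t ht => by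
      rw [dirichletWeight, if_pos (abs_lt.mpr (Finset.mem_Ioo.mp ht))]
    have edge : ∀ t : ℤ, |t| = N → dirichletWeight N t = (4 * N : ℝ)⁻¹ := fun t ht => by
      rw [dirichletWeight, if_neg ht.not_lt, if_pos ht]
    have hIcc : Icc (-N : ℤ) N = insert (N : ℤ) (insert (-N : ℤ) (Ioo (-N : ℤ) N)) := by
      rw [Finset.Ioo_insert_left (by omega), Finset.Ico_insert_right (by omega)]
    have hIco : Ico (-N : ℤ) N = insert (-N : ℤ) (Ioo (-N : ℤ) N) :=
      (Finset.Ioo_insert_left (by omega)).symm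
    rw [hIcc, hIco, Finset.sum_insert (by simp [hN]), Finset.sum_insert (by simp),
      Finset.sum_insert (by simp), Finset.sum_congr rfl fun t ht => by rw [interior t ht],
      ← Finset.mul_sum, edge _ (by simp), edge _ (by simp), hζN, hζnegN]
    push_cast
    field_simp
    ring
  rw [half]
  split_ifs with h1
  · subst h1
    simp only [one_zpow, Finset.sum_const, Int.card_Ico, nsmul_eq_mul, mul_one]
    rw [show ((N : ℤ) - -N).toNat = 2 * N by omega]
    push_cast
    field_simp
  · have := sum_Ico_zpow_eq_zero (n := 2 * N) (by rw [pow_mul', hζ, one_pow]) h1 (-N)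
    rw [show (-N : ℤ) + (2 * N : ℕ) = N by push_cast; ring] at this
    rw [this, mul_zero]

lemma sum_dirichletWeight_mul_expTwoPiI {N : ℕ} (hN : N ≠ 0) (a : ℤ) :
    ∑ t ∈ Icc (-N : ℤ) N, (dirichletWeight N t : ℂ) * expTwoPiI (t * (a / N))
      = if (N : ℤ) ∣ a then 1 else 0 := by
  have hμ := Complex.isPrimitiveRoot_exp N hN
  simp only [expTwoPiI_intCast_mul_div]
  rw [sum_dirichletWeight_mul_zpow hN (by rw [← zpow_natCast, ← zpow_mul, mul_comm a, zpow_mul,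
    zpow_natCast, hμ.pow_eq_one, one_zpow])]
  simp only [hμ.zpow_eq_one_iff_dvd]

section Interpolation

variable {m nn : ℕ} (ω : Fin m → ℕ) (p : Fin nn → Fin m → ℝ) (q : Fin nn → ℝ)

noncomputable def dirichletKernel (y : Fin m → ℝ) : ℂ :=
  ∏ j, ∑ t ∈ Icc (-ω j : ℤ) (ω j), (dirichletWeight (ω j) t : ℂ) * expTwoPiI (t * y j)

noncomputable def interpCoeff (l : Fin m → ℤ) : ℂ :=
  ∑ i, q i * ∏ j, (dirichletWeight (ω j) (l j) : ℂ) * expTwoPiI (-(l j * p i j))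

lemma interpCoeff_neg (l : Fin m → ℤ) :
    interpCoeff ω p q (-l) = starRingEnd ℂ (interpCoeff ω p q l) := by
  simp only [interpCoeff, map_sum, map_mul, map_prod, Complex.conj_ofReal, conj_expTwoPiI,
    Pi.neg_apply, dirichletWeight_neg, Int.cast_neg, neg_mul]

lemma interpCoeff_eq_zero {l : Fin m → ℤ} (hl : ¬ ∀ j, |l j| ≤ ω j) :
    interpCoeff ω p q l = 0 := by
  obtain ⟨j, hj⟩ := not_forall.mp hl
  refine Finset.sum_eq_zero fun i _ => mul_eq_zero_of_right _ ?_
  exact Finset.prod_eq_zero (Finset.mem_univ j) (by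
    rw [dirichletWeight_eq_zero (not_le.mp hj), Complex.ofReal_zero, zero_mul])

lemma tpCoef_interpCoeff : TPcoef m ω (interpCoeff ω p q) :=
  ⟨interpCoeff_neg ω p q, fun _ hl => interpCoeff_eq_zero ω p q hl⟩

noncomputable def freqBox : Finset (Fin m → ℤ) :=
  Fintype.piFinset fun j => Icc (-ω j : ℤ) (ω j)

lemma evalF_eq_sum_freqBox {d : (Fin m → ℤ) → ℂ} (hd : TPcoef m ω d) (x : Fin m → ℝ) :
    evalF m d x = (∑ l ∈ freqBox ω, d l * expTwoPiI (∑ j, l j * x j)).re := by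
  have outside : ∀ l ∉ freqBox ω, d l = 0 := fun l hl => hd.2 l fun h =>
    hl (Fintype.mem_piFinset.mpr fun j => Finset.mem_Icc.mpr (abs_le.mp (h j)))
  rw [evalF, tsum_eq_sum fun l hl => by rw [outside l hl, zero_mul]]
  simp only [expTwoPiI, Complex.ofReal_sum, Complex.ofReal_mul, Complex.ofReal_intCast]

lemma evalF_interpCoeff (x : Fin m → ℝ) :
    evalF m (interpCoeff ω p q) x = (∑ i, q i * dirichletKernel ω (x - p i)).re := by
  classical
  rw [evalF_eq_sum_freqBox ω (tpCoef_interpCoeff ω p q)]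
  congr 1
  simp only [interpCoeff, dirichletKernel, Finset.sum_mul, Finset.prod_univ_sum]
  rw [Finset.sum_comm]
  refine Finset.sum_congr rfl fun i _ => ?_
  rw [Finset.mul_sum]
  refine Finset.sum_congr rfl fun l _ => ?_
  rw [expTwoPiI_sum, mul_assoc, ← Finset.prod_mul_distrib]
  congr 1
  refine Finset.prod_congr rfl fun j _ => ?_
  rw [mul_assoc, ← expTwoPiI_add, Pi.sub_apply]
  ring_nf

end Interpolation

section Grid

variable {m nn : ℕ}

lemma dirichletKernel_grid {ω : Fin m → ℕ} (hω : ∀ j, ω j ≠ 0) (a : Fin m → ℤ) :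
    dirichletKernel ω (fun j => a j / ω j) = if ∀ j, (ω j : ℤ) ∣ a j then 1 else 0 := by
  simp only [dirichletKernel, sum_dirichletWeight_mul_expTwoPiI (hω _), Finset.prod_boole,
    Finset.mem_univ, true_imp_iff]

lemma dirichletKernel_grid_sub {ω : Fin m → ℕ} {n : Fin nn → Fin m → ℤ}
    (hrange : ∀ i j, 0 ≤ n i j ∧ n i j < ω j) (hinj : Function.Injective n) (i i' : Fin nn) :
    dirichletKernel ω ((fun j => (n i j : ℝ) / ω j) - fun j => (n i' j : ℝ) / ω j)
      = if i' = i then 1 else 0 := by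
  have hω : ∀ j, ω j ≠ 0 := fun j => by have := hrange i j; omega
  have hsub : ((fun j => (n i j : ℝ) / ω j) - fun j => (n i' j : ℝ) / ω j)
      = fun j => ((n i j - n i' j : ℤ) : ℝ) / ω j := by
    funext j
    rw [Pi.sub_apply, Int.cast_sub, sub_div]
  have hdvd : (∀ j, (ω j : ℤ) ∣ n i j - n i' j) ↔ i' = i := by
    refine ⟨fun h => hinj (funext fun j => ?_), fun h j => by simp [h]⟩
    have := Int.eq_zero_of_abs_lt_dvd (h j) (by
      have := hrange i j; have := hrange i' j; rw [abs_lt]; omega)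
    omega
  rw [hsub, dirichletKernel_grid hω]
  simp only [hdvd]

lemma evalF_interpCoeff_grid {ω : Fin m → ℕ} {n : Fin nn → Fin m → ℤ}
    (hrange : ∀ i j, 0 ≤ n i j ∧ n i j < ω j) (hinj : Function.Injective n) (q : Fin nn → ℝ)
    (i : Fin nn) :
    evalF m (interpCoeff ω (fun i j => (n i j : ℝ) / ω j) q) (fun j => (n i j : ℝ) / ω j)
      = q i := by
  simp only [evalF_interpCoeff, dirichletKernel_grid_sub hrange hinj, mul_ite, mul_one,
    mul_zero, Finset.sum_ite_eq', Finset.mem_univ, if_true, Complex.ofReal_re]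

end Grid

lemma tendsto_zero_of_sq_mul_sq_le {f : ℝ → ℝ} {a b : ℝ}
    (h : ∀ᶠ lam in atTop, lam ^ 2 * f lam ^ 2 ≤ lam * a + b) : Tendsto f atTop (nhds 0) := by
  have bound_tendsto : Tendsto (fun lam : ℝ => √(a / lam + b / lam ^ 2)) atTop (nhds 0) := by
    have := (((tendsto_const_nhds (x := a)).div_atTop tendsto_id).add
      ((tendsto_const_nhds (x := b)).div_atTop (tendsto_pow_atTop two_ne_zero))).sqrt
    simpa only [add_zero, Real.sqrt_zero, id] using this
  refine squeeze_zero_norm' ?_ bound_tendsto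
  filter_upwards [h, eventually_gt_atTop 0] with lam hle hlam
  refine Real.abs_le_sqrt ?_
  calc f lam ^ 2 = lam ^ 2 * f lam ^ 2 / lam ^ 2 := by field_simp
    _ ≤ (lam * a + b) / lam ^ 2 := by gcongr
    _ = a / lam + b / lam ^ 2 := by field_simp

section Comparison

variable {m k nn : ℕ} {lam : ℝ} {p : Fin nn → Fin m → ℝ} {q : Fin nn → ℝ}

lemma sq_mul_sq_sub_le_of_Dfun_le (hlam : 0 ≤ lam) {u d : (Fin m → ℤ) → ℂ}
    (hinterp : ∀ i, evalF m d (p i) = q i) (hle : Dfun m k nn lam p q u ≤ Dfun m k nn lam p q d)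
    (i : Fin nn) :
    lam ^ 2 * (evalF m u (p i) - q i) ^ 2
      ≤ lam * ∑' l, gradW m k l * ‖d l‖ ^ 2 + ∑' l, ‖d l‖ ^ 2 := by
  have gradW_nonneg : ∀ l, 0 ≤ gradW m k l := fun l =>
    Finset.sum_nonneg fun j _ => by rw [pow_mul]; positivity
  have fit_le : (evalF m u (p i) - q i) ^ 2 ≤ ∑ i', (evalF m u (p i') - q i') ^ 2 :=
    Finset.single_le_sum (f := fun i' => (evalF m u (p i') - q i') ^ 2)
      (fun _ _ => sq_nonneg _) (Finset.mem_univ i)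
  have smooth_nonneg : 0 ≤ lam * ∑' l, gradW m k l * ‖u l‖ ^ 2 :=
    mul_nonneg hlam (tsum_nonneg fun l => mul_nonneg (gradW_nonneg l) (by positivity))
  have mass_nonneg : 0 ≤ ∑' l, ‖u l‖ ^ 2 := tsum_nonneg fun l => by positivity
  have hd : Dfun m k nn lam p q d = lam * ∑' l, gradW m k l * ‖d l‖ ^ 2 + ∑' l, ‖d l‖ ^ 2 := by
    simp only [Dfun, hinterp, sub_self, ne_eq, OfNat.ofNat_ne_zero, not_false_eq_true,
      zero_pow, Finset.sum_const_zero, mul_zero, zero_add]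
  rw [Dfun, hd] at hle
  linarith [mul_le_mul_of_nonneg_left fit_le (sq_nonneg lam)]

lemma tendsto_evalF_of_interpolant {ω : Fin m → ℕ} {u : ℝ → (Fin m → ℤ) → ℂ}
    (hu : ∀ lam : ℝ, 0 < lam → ∀ d, TPcoef m ω d →
      Dfun m k nn lam p q (u lam) ≤ Dfun m k nn lam p q d)
    {d : (Fin m → ℤ) → ℂ} (hd : TPcoef m ω d) (hinterp : ∀ i, evalF m d (p i) = q i)
    (i : Fin nn) : Tendsto (fun lam => evalF m (u lam) (p i)) atTop (nhds (q i)) :=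
  tendsto_sub_nhds_zero_iff.mp <| tendsto_zero_of_sq_mul_sq_le <|
    (eventually_gt_atTop 0).mono fun lam hlam =>
      sq_mul_sq_sub_le_of_Dfun_le hlam.le hinterp (hu lam hlam d hd) i

end Comparison

theorem stmt_19_general (m k nn : ℕ)
    (ω : Fin m → ℕ)
    (nidx : Fin nn → Fin m → ℤ)
    (hrange : ∀ i j, 0 ≤ nidx i j ∧ nidx i j < (ω j : ℤ))
    (hinj : Function.Injective nidx)
    (q : Fin nn → ℝ)
    (u : ℝ → ((Fin m → ℤ) → ℂ))
    (hu : ∀ lam : ℝ, 0 < lam → TPcoef m ω (u lam) ∧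
      ∀ d : (Fin m → ℤ) → ℂ, TPcoef m ω d →
        Dfun m k nn lam (fun i j => (nidx i j : ℝ) / (ω j : ℝ)) q (u lam) ≤
        Dfun m k nn lam (fun i j => (nidx i j : ℝ) / (ω j : ℝ)) q d) :
    ∀ i : Fin nn,
      Tendsto (fun lam => evalF m (u lam) (fun j => (nidx i j : ℝ) / (ω j : ℝ)))
        atTop (nhds (q i)) :=
  tendsto_evalF_of_interpolant (fun lam hlam => (hu lam hlam).2) (tpCoef_interpCoeff ω _ q)
    (evalF_interpCoeff_grid hrange hinj q)

/-- If `u_λ` minimizes `D_λ` over the trigonometric polynomials of degree `≤ ω`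
and all data points lie on the uniform rectangular grid with spacing `1/ω_j` in
coordinate `j` (i.e. `p_i = (n_i^1/ω_1, …, n_i^m/ω_m)` with distinct indices),
then `u_λ(p_i) → q_i` as `λ → ∞` for every `i`. -/
theorem stmt_19 (m k nn : ℕ) (hm : 0 < m) (hk : 0 < k)
    (hkm : (m : ℝ) / 2 < (k : ℝ))
    (ω : Fin m → ℕ) (hω : ∀ j, 1 ≤ ω j)
    (nidx : Fin nn → Fin m → ℤ)
    (hrange : ∀ i j, 0 ≤ nidx i j ∧ nidx i j < (ω j : ℤ))
    (hinj : Function.Injective nidx)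
    (q : Fin nn → ℝ)
    (u : ℝ → ((Fin m → ℤ) → ℂ))
    (hu : ∀ lam : ℝ, 0 < lam → TPcoef m ω (u lam) ∧
      ∀ d : (Fin m → ℤ) → ℂ, TPcoef m ω d →
        Dfun m k nn lam (fun i j => (nidx i j : ℝ) / (ω j : ℝ)) q (u lam) ≤
        Dfun m k nn lam (fun i j => (nidx i j : ℝ) / (ω j : ℝ)) q d) :
    ∀ i : Fin nn,
      Tendsto (fun lam => evalF m (u lam) (fun j => (nidx i j : ℝ) / (ω j : ℝ)))
        atTop (nhds (q i)) :=
  stmt_19_general m k nn ω nidx hrange hinj q u hu
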